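/- Let Θ̂₀ be a symmetric real N×N matrix with vᵀ Θ̂₀ v ≥ λ₀ ‖v‖₂² for all v ∈ ℝ^N, where λ₀ > 0; let η₀ > 0, 0 ≤ σ < λ₀, and σ′ ≥ 0. Let Θ̂ : [0,∞) → ℝ^{N×N} be continuous with ‖Θ̂(s) − Θ̂₀‖_op ≤ σ for all s ≥ 0, let a₀ ∈ ℝ^{m×N}, and let a : [0,∞) → ℝ^{m×N} be continuous with ‖a(s) − a₀‖_op ≤ σ′ for all s ≥ 0. Let g^{lin}, g : [0,∞) → ℝ^N be differentiable with (g^{lin})′(t) = −η₀ Θ̂₀ g^{lin}(t), g′(t) = −η₀ Θ̂(t) g(t), g^{lin}(0) = g(0), and let p^{lin}, p : [0,∞) → ℝ^m be differentiable with (p^{lin})′(t) = −η₀ a₀ g^{lin}(t), p′(t) = −η₀ a(t) g(t), p^{lin}(0) = p(0). Then for every t ≥ 0, ‖p^{lin}(t) − p(t)‖₂ ≤ ‖g(0)‖₂ · ( σ′/λ₀ + σ (‖a₀‖_op + σ′)/(λ₀ − σ)² ). -/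

import Mathlib

/-
Coercivity of `Θ̂₀` makes the linearized residual decay: `‖gˡⁱⁿ(t)‖ ≤ e^{-η₀λ₀t} ‖g(0)‖`. The
difference `g - gˡⁱⁿ` solves the flow of `Θ̂(t)`, which is coercive with constant `λ₀ - σ`, forced
by `(Θ̂(t) - Θ̂₀) gˡⁱⁿ(t)`; after the weight `e^{η₀(λ₀-σ)t}` its norm grows at most linearly, so
`‖g(t) - gˡⁱⁿ(t)‖ ≤ η₀σ‖g(0)‖ t e^{-η₀(λ₀-σ)t}`. The derivative of `pˡⁱⁿ - p` is
`η₀ (a(t) g(t) - a₀ gˡⁱⁿ(t))`, of norm at most `η₀σ'‖gˡⁱⁿ‖ + η₀(‖a₀‖ + σ')‖g - gˡⁱⁿ‖`, and the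
integrals of these two exponential profiles over `[0, ∞)` are the two terms of the bound.
-/

open Matrix

/-- The Euclidean (ℓ²) norm of a vector in `ℝ^n`. -/
noncomputable def l2norm {n : ℕ} (v : Fin n → ℝ) : ℝ :=
  Real.sqrt (∑ i, v i ^ 2)

/-- The ℓ²→ℓ² operator norm of a real matrix. -/
noncomputable def l2OpNorm {m n : ℕ} (A : Matrix (Fin m) (Fin n) ℝ) : ℝ :=
  ‖(Matrix.toEuclideanLin A).toContinuousLinearMap‖

open Real Set
open scoped RealInnerProductSpace

section InnerComparison

variable {E : Type*} [NormedAddCommGroup E] [InnerProductSpace ℝ E] {f f' : ℝ → E}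

theorem norm_le_norm_zero_add_mul_of_inner_deriv_le {K : ℝ} (hK : 0 ≤ K)
    (hf : ∀ t, 0 ≤ t → HasDerivAt f (f' t) t)
    (hinner : ∀ t, 0 ≤ t → ⟪f t, f' t⟫ ≤ K * ‖f t‖) {t : ℝ} (ht : 0 ≤ t) :
    ‖f t‖ ≤ ‖f 0‖ + K * t := by
  refine le_of_forall_pos_le_add fun ε hε => ?_
  -- `√(ε² + ‖f‖²)` is a differentiable stand-in for `‖f‖`.
  set S : ℝ → ℝ := fun s => √(ε ^ 2 + ‖f s‖ ^ 2)
  have hS_pos : ∀ s, 0 < S s := fun s => Real.sqrt_pos.2 (by positivity)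
  have hnorm_le_S : ∀ s, ‖f s‖ ≤ S s := fun s =>
    Real.le_sqrt_of_sq_le (le_add_of_nonneg_left (sq_nonneg ε))
  have hS_deriv : ∀ s, 0 ≤ s → HasDerivAt (fun s => S s - K * s) (⟪f s, f' s⟫ / S s - K) s := by
    intro s hs
    have h := ((((hf s hs).norm_sq).const_add (ε ^ 2)).sqrt
      (by positivity : (0 : ℝ) < ε ^ 2 + ‖f s‖ ^ 2).ne').sub ((hasDerivAt_id' s).const_mul K)
    rwa [mul_one, mul_div_mul_left _ _ two_ne_zero] at h
  have hanti : AntitoneOn (fun s => S s - K * s) (Ici 0) := by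
    refine antitoneOn_of_hasDerivWithinAt_nonpos (convex_Ici 0)
      (fun s hs => (hS_deriv s hs).continuousAt.continuousWithinAt)
      (fun s hs => (hS_deriv s (interior_subset hs)).hasDerivWithinAt) fun s hs => ?_
    rw [sub_nonpos, div_le_iff₀ (hS_pos s)]
    exact (hinner s (interior_subset hs)).trans
      (mul_le_mul_of_nonneg_left (hnorm_le_S s) hK)
  have hS0 : S 0 ≤ ‖f 0‖ + ε :=
    Real.sqrt_le_iff.2 ⟨by positivity, by nlinarith [norm_nonneg (f 0)]⟩
  have hmono := hanti self_mem_Ici ht ht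
  simp only [mul_zero, sub_zero] at hmono
  linarith [hnorm_le_S t]

theorem norm_le_mul_exp_of_inner_deriv_le {c K : ℝ} (hK : 0 ≤ K)
    (hf : ∀ t, 0 ≤ t → HasDerivAt f (f' t) t)
    (hinner : ∀ t, 0 ≤ t → ⟪f t, f' t⟫ ≤ -c * ‖f t‖ ^ 2 + K * exp (-c * t) * ‖f t‖)
    {t : ℝ} (ht : 0 ≤ t) :
    ‖f t‖ ≤ (‖f 0‖ + K * t) * exp (-c * t) := by
  have hexp : ∀ s, HasDerivAt (fun s => exp (c * s)) (exp (c * s) * c) s := fun s => by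
    simpa using ((hasDerivAt_id s).const_mul c).exp
  have hnorm : ∀ s, ‖exp (c * s) • f s‖ = exp (c * s) * ‖f s‖ := fun s => by
    rw [norm_smul, Real.norm_of_nonneg (exp_pos _).le]
  have hcancel : ∀ s, exp (c * s) * exp (-c * s) = 1 := fun s => by
    rw [← exp_add, show c * s + -c * s = 0 by ring, exp_zero]
  have hweighted :=
    norm_le_norm_zero_add_mul_of_inner_deriv_le (f := fun s => exp (c * s) • f s) hK
    (fun s hs => (hexp s).smul (hf s hs)) (fun s hs => ?_) ht
  · rw [hnorm, hnorm, mul_zero, exp_zero, one_mul] at hweighted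
    calc ‖f t‖ = exp (-c * t) * (exp (c * t) * ‖f t‖) := by
          rw [← mul_assoc, mul_comm (exp _), hcancel, one_mul]
      _ ≤ exp (-c * t) * (‖f 0‖ + K * t) := by gcongr
      _ = _ := mul_comm _ _
  · rw [hnorm, inner_add_right, real_inner_smul_left, real_inner_smul_right,
      real_inner_smul_left, real_inner_smul_right, real_inner_self_eq_norm_sq]
    calc exp (c * s) * (exp (c * s) * ⟪f s, f' s⟫) + exp (c * s) * (exp (c * s) * c * ‖f s‖ ^ 2)
        = exp (c * s) ^ 2 * ⟪f s, f' s⟫ + exp (c * s) ^ 2 * c * ‖f s‖ ^ 2 := by ring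
      _ ≤ exp (c * s) ^ 2 * (-c * ‖f s‖ ^ 2 + K * exp (-c * s) * ‖f s‖)
          + exp (c * s) ^ 2 * c * ‖f s‖ ^ 2 := by gcongr; exact hinner s hs
      _ = K * (exp (c * s) * ‖f s‖) * (exp (c * s) * exp (-c * s)) := by ring
      _ = K * (exp (c * s) * ‖f s‖) := by rw [hcancel, mul_one]

end InnerComparison

theorem hasDerivAt_one_sub_exp_neg_mul_div {c : ℝ} (hc : c ≠ 0) (s : ℝ) :
    HasDerivAt (fun s => (1 - exp (-c * s)) / c) (exp (-c * s)) s := by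
  have h := (((hasDerivAt_id' s).const_mul (-c)).exp.const_sub 1).div_const c
  exact h.congr_deriv (by field_simp)

theorem hasDerivAt_one_sub_one_add_mul_mul_exp_neg_mul_div {c : ℝ} (hc : c ≠ 0) (s : ℝ) :
    HasDerivAt (fun s => (1 - (1 + c * s) * exp (-c * s)) / c ^ 2) (s * exp (-c * s)) s := by
  have h := ((((hasDerivAt_id' s).const_mul c).const_add 1).mul
    ((hasDerivAt_id' s).const_mul (-c)).exp).const_sub 1 |>.div_const (c ^ 2)
  exact h.congr_deriv (by field_simp; ring)

theorem norm_le_of_norm_deriv_le_exp_decay {F : Type*} [NormedAddCommGroup F] [NormedSpace ℝ F]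
    {Q Q' : ℝ → F} {α μ K₁ K₂ : ℝ} (hα : 0 < α) (hμ : 0 < μ) (hK₁ : 0 ≤ K₁) (hK₂ : 0 ≤ K₂)
    (hQ : ∀ t, 0 ≤ t → HasDerivAt Q (Q' t) t) (hQ0 : Q 0 = 0)
    (hQ' : ∀ t, 0 ≤ t → ‖Q' t‖ ≤ K₁ * exp (-α * t) + K₂ * (t * exp (-μ * t)))
    {t : ℝ} (ht : 0 ≤ t) :
    ‖Q t‖ ≤ K₁ / α + K₂ / μ ^ 2 := by
  set B : ℝ → ℝ := fun s =>
    K₁ * ((1 - exp (-α * s)) / α) + K₂ * ((1 - (1 + μ * s) * exp (-μ * s)) / μ ^ 2)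
  have hB : ∀ s, HasDerivAt B (K₁ * exp (-α * s) + K₂ * (s * exp (-μ * s))) s := fun s =>
    ((hasDerivAt_one_sub_exp_neg_mul_div hα.ne' s).const_mul K₁).add
      ((hasDerivAt_one_sub_one_add_mul_mul_exp_neg_mul_div hμ.ne' s).const_mul K₂)
  have hQB : ‖Q t‖ ≤ B t :=
    image_norm_le_of_norm_deriv_right_le_deriv_boundary (a := 0) (b := t)
      (fun s hs => (hQ s hs.1).continuousAt.continuousWithinAt)
      (fun s hs => (hQ s hs.1).hasDerivWithinAt) (by simp [B, hQ0]) hB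
      (fun s hs => hQ' s hs.1) ⟨ht, le_rfl⟩
  have hdecay₁ : 0 ≤ exp (-α * t) := (exp_pos _).le
  have hdecay₂ : 0 ≤ (1 + μ * t) * exp (-μ * t) := by positivity
  calc ‖Q t‖ ≤ B t := hQB
    _ ≤ K₁ * (1 / α) + K₂ * (1 / μ ^ 2) := by
      simp only [B]
      gcongr <;> linarith
    _ = K₁ / α + K₂ / μ ^ 2 := by ring

section OperatorEstimates

variable {E F : Type*} [NormedAddCommGroup E] [InnerProductSpace ℝ E]
  [NormedAddCommGroup F] [NormedSpace ℝ F]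

theorem sub_mul_sq_sub_le_inner_apply_sub_apply {T₀ T : E →L[ℝ] E} {lam σ : ℝ}
    (hT₀ : ∀ v, lam * ‖v‖ ^ 2 ≤ ⟪v, T₀ v⟫) (hT : ‖T - T₀‖ ≤ σ) (u w : E) :
    (lam - σ) * ‖u - w‖ ^ 2 - σ * ‖w‖ * ‖u - w‖ ≤ ⟪u - w, T u - T₀ w⟫ := by
  have hsplit : T u - T₀ w = T₀ (u - w) + (T - T₀) u := by
    simp only [map_sub, _root_.sub_apply]
    abel
  have hpert : ‖(T - T₀) u‖ ≤ σ * (‖u - w‖ + ‖w‖) :=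
    ((T - T₀).le_opNorm u).trans (mul_le_mul hT (norm_le_norm_sub_add u w) (norm_nonneg _)
      ((norm_nonneg _).trans hT))
  have hcs := neg_le_of_abs_le (abs_real_inner_le_norm (u - w) ((T - T₀) u))
  rw [hsplit, inner_add_right]
  nlinarith [hT₀ (u - w), mul_le_mul_of_nonneg_left hpert (norm_nonneg (u - w))]

theorem norm_apply_sub_apply_le {A₀ A : E →L[ℝ] F} {σ' : ℝ} (hA : ‖A - A₀‖ ≤ σ') (u w : E) :
    ‖A u - A₀ w‖ ≤ σ' * ‖w‖ + (‖A₀‖ + σ') * ‖u - w‖ := by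
  have hsplit : A u - A₀ w = (A - A₀) w + A (u - w) := by
    simp only [map_sub, _root_.sub_apply]
    abel
  have hA_norm : ‖A‖ ≤ ‖A₀‖ + σ' := by
    simpa using (norm_le_norm_sub_add A A₀).trans (by linarith)
  rw [hsplit]
  calc ‖(A - A₀) w + A (u - w)‖ ≤ ‖A - A₀‖ * ‖w‖ + ‖A‖ * ‖u - w‖ :=
        (norm_add_le _ _).trans (add_le_add ((A - A₀).le_opNorm w) (A.le_opNorm _))
    _ ≤ σ' * ‖w‖ + (‖A₀‖ + σ') * ‖u - w‖ := by gcongr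

end OperatorEstimates

section KernelFlows

variable {E F : Type*} [NormedAddCommGroup E] [InnerProductSpace ℝ E]
  [NormedAddCommGroup F] [NormedSpace ℝ F]
  {η lam σ σ' : ℝ} {T₀ : E →L[ℝ] E} {T : ℝ → E →L[ℝ] E} {glin g : ℝ → E}

theorem norm_le_mul_exp_of_linearized_flow (hη : 0 < η)
    (hT₀ : ∀ v, lam * ‖v‖ ^ 2 ≤ ⟪v, T₀ v⟫)
    (hglin : ∀ t, 0 ≤ t → HasDerivAt glin (-(η • T₀ (glin t))) t) {t : ℝ} (ht : 0 ≤ t) :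
    ‖glin t‖ ≤ ‖glin 0‖ * exp (-(η * lam) * t) := by
  simpa using norm_le_mul_exp_of_inner_deriv_le le_rfl hglin (fun s _ => by
    rw [inner_neg_right, real_inner_smul_right, zero_mul, zero_mul, add_zero]
    nlinarith [mul_le_mul_of_nonneg_left (hT₀ (glin s)) hη.le]) ht

theorem norm_sub_le_mul_exp_of_flows (hη : 0 < η) (hσ : 0 ≤ σ)
    (hT₀ : ∀ v, lam * ‖v‖ ^ 2 ≤ ⟪v, T₀ v⟫) (hT : ∀ t, 0 ≤ t → ‖T t - T₀‖ ≤ σ)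
    (hglin : ∀ t, 0 ≤ t → HasDerivAt glin (-(η • T₀ (glin t))) t)
    (hg : ∀ t, 0 ≤ t → HasDerivAt g (-(η • T t (g t))) t) (hg0 : glin 0 = g 0)
    {t : ℝ} (ht : 0 ≤ t) :
    ‖g t - glin t‖ ≤ η * σ * ‖glin 0‖ * t * exp (-(η * (lam - σ)) * t) := by
  have hdecay : ∀ s, 0 ≤ s → ‖glin s‖ ≤ ‖glin 0‖ * exp (-(η * (lam - σ)) * s) := fun s hs =>
    (norm_le_mul_exp_of_linearized_flow hη hT₀ hglin hs).trans <| by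
      gcongr
      nlinarith [mul_nonneg hη.le hσ]
  have hD := norm_le_mul_exp_of_inner_deriv_le (f := fun s => g s - glin s)
    (c := η * (lam - σ)) (K := η * σ * ‖glin 0‖) (by positivity)
    (fun s hs => (hg s hs).sub (hglin s hs)) (fun s hs => ?_) ht
  · simpa [hg0] using hD
  · have hcoercive := sub_mul_sq_sub_le_inner_apply_sub_apply hT₀ (hT s hs) (g s) (glin s)
    have hmono := mul_le_mul_of_nonneg_left (hdecay s hs) (mul_nonneg hη.le hσ)
    rw [neg_sub_neg, ← smul_sub, real_inner_smul_right, ← neg_sub (T s (g s)), inner_neg_right]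
    nlinarith [mul_le_mul_of_nonneg_left hcoercive hη.le,
      mul_le_mul_of_nonneg_right hmono (norm_nonneg (g s - glin s))]

theorem norm_sub_le_of_kernel_flows (hlam : 0 < lam) (hη : 0 < η) (hσ : 0 ≤ σ) (hσlt : σ < lam)
    (hσ' : 0 ≤ σ') (hT₀ : ∀ v, lam * ‖v‖ ^ 2 ≤ ⟪v, T₀ v⟫) (hT : ∀ t, 0 ≤ t → ‖T t - T₀‖ ≤ σ)
    {A₀ : E →L[ℝ] F} {A : ℝ → E →L[ℝ] F} (hA : ∀ t, 0 ≤ t → ‖A t - A₀‖ ≤ σ')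
    (hglin : ∀ t, 0 ≤ t → HasDerivAt glin (-(η • T₀ (glin t))) t)
    (hg : ∀ t, 0 ≤ t → HasDerivAt g (-(η • T t (g t))) t) (hg0 : glin 0 = g 0)
    {plin p : ℝ → F} (hplin : ∀ t, 0 ≤ t → HasDerivAt plin (-(η • A₀ (glin t))) t)
    (hp : ∀ t, 0 ≤ t → HasDerivAt p (-(η • A t (g t))) t) (hp0 : plin 0 = p 0)
    {t : ℝ} (ht : 0 ≤ t) :
    ‖plin t - p t‖ ≤ ‖g 0‖ * (σ' / lam + σ * (‖A₀‖ + σ') / (lam - σ) ^ 2) := by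
  have hgap : 0 < lam - σ := sub_pos.2 hσlt
  have hderiv_le : ∀ s, 0 ≤ s → ‖-(η • A₀ (glin s)) - -(η • A s (g s))‖ ≤
      η * σ' * ‖glin 0‖ * exp (-(η * lam) * s) +
        η * (‖A₀‖ + σ') * (η * σ * ‖glin 0‖) * (s * exp (-(η * (lam - σ)) * s)) := by
    intro s hs
    rw [neg_sub_neg, ← smul_sub, norm_smul, Real.norm_of_nonneg hη.le]
    calc η * ‖A s (g s) - A₀ (glin s)‖
        ≤ η * (σ' * ‖glin s‖ + (‖A₀‖ + σ') * ‖g s - glin s‖) := by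
          gcongr
          exact norm_apply_sub_apply_le (hA s hs) _ _
      _ ≤ η * (σ' * (‖glin 0‖ * exp (-(η * lam) * s)) +
            (‖A₀‖ + σ') * (η * σ * ‖glin 0‖ * s * exp (-(η * (lam - σ)) * s))) := by
          gcongr
          · exact norm_le_mul_exp_of_linearized_flow hη hT₀ hglin hs
          · exact norm_sub_le_mul_exp_of_flows hη hσ hT₀ hT hglin hg hg0 hs
      _ = _ := by ring
  calc ‖plin t - p t‖
      ≤ η * σ' * ‖glin 0‖ / (η * lam) +
          η * (‖A₀‖ + σ') * (η * σ * ‖glin 0‖) / (η * (lam - σ)) ^ 2 :=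
        norm_le_of_norm_deriv_le_exp_decay (mul_pos hη hlam) (mul_pos hη hgap) (by positivity)
          (by positivity) (fun s hs => (hplin s hs).sub (hp s hs)) (by simp [hp0]) hderiv_le ht
    _ = ‖g 0‖ * (σ' / lam + σ * (‖A₀‖ + σ') / (lam - σ) ^ 2) := by
        rw [hg0]
        field_simp

end KernelFlows

section EuclideanTransport

open WithLp

theorem l2norm_eq_norm_toLp {n : ℕ} (v : Fin n → ℝ) : l2norm v = ‖toLp 2 v‖ := by
  simp [l2norm, EuclideanSpace.norm_eq]

theorem hasDerivAt_toLp {ι : Type*} [Fintype ι] {f : ℝ → ι → ℝ} {f' : ι → ℝ} {t : ℝ}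
    (h : HasDerivAt f f' t) : HasDerivAt (fun s => toLp 2 (f s)) (toLp 2 f') t :=
  (PiLp.hasFDerivAt_toLp 2 (f t)).comp_hasDerivAt t h

theorem le_inner_toEuclideanLin {n : ℕ} {M : Matrix (Fin n) (Fin n) ℝ} {lam : ℝ}
    (h : ∀ v : Fin n → ℝ, lam * l2norm v ^ 2 ≤ v ⬝ᵥ M *ᵥ v) (v : EuclideanSpace ℝ (Fin n)) :
    lam * ‖v‖ ^ 2 ≤ ⟪v, toEuclideanLin M v⟫ := by
  simpa [l2norm_eq_norm_toLp, EuclideanSpace.inner_eq_star_dotProduct, dotProduct_comm]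
    using h (ofLp v)

theorem l2OpNorm_sub {m n : ℕ} (A B : Matrix (Fin m) (Fin n) ℝ) :
    l2OpNorm (A - B) =
      ‖(toEuclideanLin A).toContinuousLinearMap - (toEuclideanLin B).toContinuousLinearMap‖ := by
  rw [l2OpNorm, map_sub, map_sub]

end EuclideanTransport

theorem test_residual_discrepancy_bound {N m : ℕ}
    (Θ₀ : Matrix (Fin N) (Fin N) ℝ)
    (lam₀ : ℝ) (hlam₀ : 0 < lam₀)
    (hΘ₀lb : ∀ v : Fin N → ℝ, lam₀ * l2norm v ^ 2 ≤ v ⬝ᵥ Θ₀.mulVec v)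
    (η₀ σ σ' : ℝ) (hη₀ : 0 < η₀) (hσ0 : 0 ≤ σ) (hσlt : σ < lam₀) (hσ' : 0 ≤ σ')
    (Θ : ℝ → Matrix (Fin N) (Fin N) ℝ)
    (hΘclose : ∀ s : ℝ, 0 ≤ s → l2OpNorm (Θ s - Θ₀) ≤ σ)
    (a₀ : Matrix (Fin m) (Fin N) ℝ)
    (a : ℝ → Matrix (Fin m) (Fin N) ℝ)
    (haclose : ∀ s : ℝ, 0 ≤ s → l2OpNorm (a s - a₀) ≤ σ')
    (glin g : ℝ → (Fin N → ℝ))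
    (hglin : ∀ t : ℝ, 0 ≤ t → HasDerivAt glin (-(η₀ • Θ₀.mulVec (glin t))) t)
    (hgf : ∀ t : ℝ, 0 ≤ t → HasDerivAt g (-(η₀ • (Θ t).mulVec (g t))) t)
    (hg0 : glin 0 = g 0)
    (plin p : ℝ → (Fin m → ℝ))
    (hplin : ∀ t : ℝ, 0 ≤ t → HasDerivAt plin (-(η₀ • a₀.mulVec (glin t))) t)
    (hpf : ∀ t : ℝ, 0 ≤ t → HasDerivAt p (-(η₀ • (a t).mulVec (g t))) t)
    (hp0 : plin 0 = p 0) :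
    ∀ t : ℝ, 0 ≤ t →
      l2norm (plin t - p t) ≤
        l2norm (g 0) * (σ' / lam₀ + σ * (l2OpNorm a₀ + σ') / (lam₀ - σ) ^ 2) := by
  intro t ht
  rw [l2norm_eq_norm_toLp, l2norm_eq_norm_toLp, WithLp.toLp_sub]
  exact norm_sub_le_of_kernel_flows (T₀ := (toEuclideanLin Θ₀).toContinuousLinearMap)
    (T := fun s => (toEuclideanLin (Θ s)).toContinuousLinearMap)
    (A₀ := (toEuclideanLin a₀).toContinuousLinearMap)
    (A := fun s => (toEuclideanLin (a s)).toContinuousLinearMap)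
    hlam₀ hη₀ hσ0 hσlt hσ' (le_inner_toEuclideanLin hΘ₀lb)
    (fun s hs => l2OpNorm_sub (Θ s) Θ₀ ▸ hΘclose s hs)
    (fun s hs => l2OpNorm_sub (a s) a₀ ▸ haclose s hs)
    (fun s hs => hasDerivAt_toLp (hglin s hs)) (fun s hs => hasDerivAt_toLp (hgf s hs))
    (congrArg _ hg0) (fun s hs => hasDerivAt_toLp (hplin s hs))
    (fun s hs => hasDerivAt_toLp (hpf s hs)) (congrArg _ hp0) ht
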